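/- arXiv:1604.02964 — 4 statements merged into one kernel-verified Lean document; each statement's English description precedes it below -/
import Mathlib

section
/- The gamma ratio asymptotic: for fixed complex λ with Re(λ) > 0 and fixed real s > 0, the product γ_n = ∏_{j=0}^{n-1} (1 + λ/(r j + s)) (with r > 0) satisfies γ_n = (Γ(s/r) / Γ((s+λ)/r)) · n^{λ/r} + O(n^{Re(λ)/r − 1}) as n → ∞. -/
/-!
With `a = s / r` and `w = λ / r` the product is `γ n = ∏_{j<n} (1 + w / (a + j))`. Euler's limit
formula (`Complex.GammaSeq`) shows that `f n = γ n * n ^ (-w)` tends to `Γ(a) / Γ(a + w)`.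
The ratio `f (n + 1) / f n = (1 + w / (a + n)) * (1 + 1 / n) ^ (-w)` is `1 + O(1 / n²)`, because
the first-order terms `± w / n` cancel; hence the increments of `f` are `O(1 / n²)`, and summing
the tail gives `f n - Γ(a) / Γ(a + w) = O(1 / n)`. Multiplying by `‖n ^ w‖ = n ^ (re w)` gives the
claim.
-/

open Filter Asymptotics Topology Finset

namespace Complex

lemma one_add_cpow_sub_one_add_mul_isBigO (w : ℂ) :
    (fun z : ℂ => (1 + z) ^ w - (1 + w * z)) =O[𝓝 0] fun z => z ^ 2 := by
  have hlog_sub : (fun z : ℂ => log (1 + z) - z) =O[𝓝 0] fun z => z ^ 2 := log_sub_self_isBigO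
  have hlog : (fun z : ℂ => log (1 + z)) =O[𝓝 0] fun z => z := by
    simpa using (hlog_sub.trans (isLittleO_pow_pow one_lt_two).isBigO).add (isBigO_refl _ _)
  set u : ℂ → ℂ := fun z => log (1 + z) * w
  have hu : Tendsto u (𝓝 0) (𝓝 0) := by
    have : ContinuousAt u 0 :=
      ((continuousAt_clog (by simp)).comp (by fun_prop)).mul continuousAt_const
    simpa [u] using this.tendsto
  have hexp : (fun z => exp (u z) - 1 - u z) =O[𝓝 0] fun z => z ^ 2 := by
    have hu2 : (fun z => u z ^ 2) =O[𝓝 0] fun z => z ^ 2 :=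
      (hlog.mul (isBigO_const_one ℂ w _)).pow 2 |>.congr_right (by simp)
    simpa [sum_range_succ, sub_sub, Function.comp_def] using
      ((exp_sub_sum_range_isBigO_pow 2).comp_tendsto hu).trans hu2
  have hcpow : ∀ᶠ z : ℂ in 𝓝 0, (1 + z) ^ w = exp (u z) := by
    filter_upwards [(continuous_const.add continuous_id).continuousAt.eventually_ne
      (by simp : (1 : ℂ) + 0 ≠ 0)] with z hz
    exact cpow_def_of_ne_zero hz w
  refine (hexp.add (hlog_sub.const_mul_left w)).congr' ?_ .rfl
  filter_upwards [hcpow] with z hz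
  rw [hz]
  ring

lemma one_add_mul_div_mul_one_add_cpow_neg_sub_one_isBigO (a w : ℂ) :
    (fun z : ℂ => (1 + w * z / (1 + a * z)) * (1 + z) ^ (-w) - 1) =O[𝓝 0] fun z => z ^ 2 := by
  have hz : (fun z : ℂ => z) =O[𝓝 0] fun z => z := isBigO_refl _ _
  have hz2 : (fun z : ℂ => z ^ 2) =O[𝓝 0] fun z => z :=
    (isLittleO_pow_pow one_lt_two).isBigO.congr_right (by simp)
  have hden_cont : ContinuousAt (fun z : ℂ => 1 + a * z) 0 := by fun_prop
  have hden : (fun z : ℂ => (1 + a * z)⁻¹) =O[𝓝 0] fun _ => (1 : ℂ) :=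
    (hden_cont.inv₀ (by simp)).tendsto.isBigO_one ℂ
  have hp : (fun z : ℂ => w * z / (1 + a * z) - w * z) =O[𝓝 0] fun z => z ^ 2 := by
    refine ((hden.const_mul_left (-(a * w))).mul (isBigO_refl (fun z : ℂ => z ^ 2) _)).congr'
      ?_ (by simp)
    filter_upwards [hden_cont.eventually_ne (by simp : 1 + a * 0 ≠ 0)] with z hz
    field_simp
    ring
  have hq : (fun z : ℂ => ((1 + z) ^ (-w) - 1) - -w * z) =O[𝓝 0] fun z => z ^ 2 := by
    refine (one_add_cpow_sub_one_add_mul_isBigO (-w)).congr (fun z => ?_) (fun _ => rfl)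
    ring
  have hp1 : (fun z : ℂ => w * z / (1 + a * z)) =O[𝓝 0] fun z => z := by
    simpa using (hp.trans hz2).add (hz.const_mul_left w)
  have hq1 : (fun z : ℂ => (1 + z) ^ (-w) - 1) =O[𝓝 0] fun z => z := by
    simpa using (hq.trans hz2).add (hz.const_mul_left (-w))
  -- with `p = w z / (1 + a z)`, `q = (1 + z) ^ (-w) - 1`:
  -- `(1 + p) (1 + q) - 1 = (p - w z) + (q + w z) + p q`
  refine ((hp.add hq).add ((hp1.mul hq1).congr_right fun z => (sq z).symm)).congr
    (fun z => ?_) (fun _ => rfl)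
  ring

end Complex

lemma inv_sq_le_two_mul_inv_sub_inv {x : ℝ} (hx : 1 ≤ x) :
    (x ^ 2)⁻¹ ≤ 2 * (x⁻¹ - (x + 1)⁻¹) := by
  have hx0 : 0 < x := by linarith
  rw [inv_sub_inv hx0.ne' (by linarith), add_sub_cancel_left, mul_one_div, ← one_div,
    div_le_div_iff₀ (by positivity) (by positivity)]
  nlinarith

lemma isBigO_sub_of_tendsto_of_isBigO_sub_succ {E : Type*} [NormedAddCommGroup E] {f : ℕ → E}
    {L : E} (hf : Tendsto f atTop (𝓝 L))
    (hd : (fun n => f (n + 1) - f n) =O[atTop] fun n => ((n : ℝ) ^ 2)⁻¹) :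
    (fun n => f n - L) =O[atTop] fun n => (n : ℝ)⁻¹ := by
  obtain ⟨K, hK0, hK⟩ := hd.exists_pos
  obtain ⟨N, hN⟩ := eventually_atTop.mp (hK.bound.and (eventually_ge_atTop 1))
  have hcauchy : ∀ n ≥ N, ∀ m ≥ n, ‖f m - f n‖ ≤ 2 * K * ((n : ℝ)⁻¹ - (m : ℝ)⁻¹) := by
    intro n hn m hm
    induction m, hm using Nat.le_induction with
    | base => simp
    | succ m hnm ih =>
      obtain ⟨hKm, hm1⟩ := hN m (hn.trans hnm)
      calc ‖f (m + 1) - f n‖ ≤ ‖f (m + 1) - f m‖ + ‖f m - f n‖ :=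
            norm_sub_le_norm_sub_add_norm_sub _ _ _
        _ ≤ K * ((m : ℝ) ^ 2)⁻¹ + 2 * K * ((n : ℝ)⁻¹ - (m : ℝ)⁻¹) := by
          gcongr
          simpa using hKm
        _ ≤ K * (2 * ((m : ℝ)⁻¹ - (m + 1 : ℝ)⁻¹)) + 2 * K * ((n : ℝ)⁻¹ - (m : ℝ)⁻¹) := by
          gcongr
          exact inv_sq_le_two_mul_inv_sub_inv (by exact_mod_cast hm1)
        _ = 2 * K * ((n : ℝ)⁻¹ - ((m + 1 : ℕ) : ℝ)⁻¹) := by push_cast; ring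
  refine IsBigO.of_bound (2 * K) ?_
  filter_upwards [eventually_ge_atTop N] with n hn
  rw [norm_sub_rev, norm_inv, Real.norm_natCast]
  refine le_of_tendsto (hf.sub_const (f n)).norm ?_
  filter_upwards [eventually_ge_atTop n] with m hm
  have : (0 : ℝ) ≤ (m : ℝ)⁻¹ := by positivity
  nlinarith [hcauchy n hn m hm]

noncomputable def gammaProd (a w : ℂ) (n : ℕ) : ℂ :=
  ∏ j ∈ range n, (1 + w / (a + j))

lemma add_natCast_ne_zero_of_re_pos {a : ℂ} (ha : 0 < a.re) (j : ℕ) : a + j ≠ 0 :=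
  ne_of_apply_ne Complex.re <| by
    rw [Complex.add_re, Complex.natCast_re, Complex.zero_re]
    positivity

lemma gammaProd_eq_prod_div_prod {a : ℂ} (ha : 0 < a.re) (w : ℂ) (n : ℕ) :
    gammaProd a w n = (∏ j ∈ range n, (a + w + j)) / ∏ j ∈ range n, (a + j) := by
  rw [gammaProd, ← prod_div_distrib]
  refine prod_congr rfl fun j _ => ?_
  have := add_natCast_ne_zero_of_re_pos ha j
  field_simp
  ring

lemma Complex.GammaSeq_div_GammaSeq_add {a : ℂ} (ha : 0 < a.re) (w : ℂ) {n : ℕ} (hn : n ≠ 0) :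
    GammaSeq a n / GammaSeq (a + w) n = gammaProd a w (n + 1) * (n : ℂ) ^ (-w) := by
  have hn' : (n : ℂ) ≠ 0 := Nat.cast_ne_zero.mpr hn
  have hfac : (n.factorial : ℂ) ≠ 0 := Nat.cast_ne_zero.mpr n.factorial_ne_zero
  have hpow : (n : ℂ) ^ a ≠ 0 := cpow_ne_zero_iff.mpr (Or.inl hn')
  have hprod : ∏ j ∈ range (n + 1), (a + j) ≠ 0 :=
    prod_ne_zero_iff.mpr fun j _ => add_natCast_ne_zero_of_re_pos ha j
  rw [GammaSeq, GammaSeq, gammaProd_eq_prod_div_prod ha, cpow_neg, cpow_add _ _ hn']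
  field_simp

lemma one_add_div_add_natCast (a w : ℂ) {n : ℕ} (hn : n ≠ 0) :
    1 + w / (a + n) = 1 + w * (n : ℂ)⁻¹ / (1 + a * (n : ℂ)⁻¹) := by
  have hn' : (n : ℂ) ≠ 0 := Nat.cast_ne_zero.mpr hn
  rw [← div_eq_mul_inv, div_div, mul_add, mul_one, mul_comm a, mul_inv_cancel_left₀ hn',
    add_comm a]

lemma tendsto_one_add_div_add_natCast (a w : ℂ) :
    Tendsto (fun n : ℕ => 1 + w / (a + n)) atTop (𝓝 1) := by
  have hcont : ContinuousAt (fun z : ℂ => 1 + w * z / (1 + a * z)) 0 := by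
    fun_prop (disch := simp)
  have := hcont.tendsto.comp tendsto_inv_atTop_nhds_zero_nat
  simp only [mul_zero, zero_div, add_zero] at this
  refine this.congr' ?_
  filter_upwards [eventually_ne_atTop 0] with n hn
  exact (one_add_div_add_natCast a w hn).symm

lemma tendsto_gammaProd_mul_cpow_neg {a : ℂ} (ha : 0 < a.re) {w : ℂ}
    (hb : Complex.Gamma (a + w) ≠ 0) :
    Tendsto (fun n => gammaProd a w n * (n : ℂ) ^ (-w)) atTop
      (𝓝 (Complex.Gamma a / Complex.Gamma (a + w))) := by
  have hseq : Tendsto (fun n => gammaProd a w (n + 1) * (n : ℂ) ^ (-w)) atTop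
      (𝓝 (Complex.Gamma a / Complex.Gamma (a + w))) := by
    refine ((Complex.GammaSeq_tendsto_Gamma a).div (Complex.GammaSeq_tendsto_Gamma _) hb).congr' ?_
    filter_upwards [eventually_ne_atTop 0] with n hn
    exact Complex.GammaSeq_div_GammaSeq_add ha w hn
  have hfactor := tendsto_one_add_div_add_natCast a w
  rw [← div_one (_ / _)]
  refine (hseq.div hfactor one_ne_zero).congr' ?_
  filter_upwards [hfactor.eventually_ne one_ne_zero] with n hn
  simp only [Pi.div_apply, gammaProd, prod_range_succ]
  field_simp

lemma natCast_add_one_cpow (n : ℕ) (hn : n ≠ 0) (w : ℂ) :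
    ((n + 1 : ℕ) : ℂ) ^ w = (n : ℂ) ^ w * (1 + (n : ℂ)⁻¹) ^ w := by
  have hn' : (n : ℝ) ≠ 0 := Nat.cast_ne_zero.mpr hn
  have h := Complex.mul_cpow_ofReal_nonneg (Nat.cast_nonneg n)
    (by positivity : (0 : ℝ) ≤ 1 + (n : ℝ)⁻¹) w
  push_cast at h
  rw [mul_add, mul_one, mul_inv_cancel₀ (by exact_mod_cast hn')] at h
  exact_mod_cast h

lemma gammaProd_succ_mul_cpow_neg (a w : ℂ) {n : ℕ} (hn : n ≠ 0) :
    gammaProd a w (n + 1) * ((n + 1 : ℕ) : ℂ) ^ (-w) = gammaProd a w n * (n : ℂ) ^ (-w) *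
      ((1 + w * (n : ℂ)⁻¹ / (1 + a * (n : ℂ)⁻¹)) * (1 + (n : ℂ)⁻¹) ^ (-w)) := by
  rw [gammaProd, prod_range_succ, ← gammaProd, natCast_add_one_cpow n hn,
    one_add_div_add_natCast a w hn]
  ring

theorem gammaProd_sub_mul_cpow_isBigO {a : ℂ} (ha : 0 < a.re) {w : ℂ}
    (hb : Complex.Gamma (a + w) ≠ 0) :
    (fun n : ℕ => gammaProd a w n - Complex.Gamma a / Complex.Gamma (a + w) * (n : ℂ) ^ w)
      =O[atTop] fun n : ℕ => (n : ℝ) ^ (w.re - 1) := by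
  set f := fun n : ℕ => gammaProd a w n * (n : ℂ) ^ (-w)
  have hf := tendsto_gammaProd_mul_cpow_neg ha hb
  have hratio : (fun n : ℕ => (1 + w * (n : ℂ)⁻¹ / (1 + a * (n : ℂ)⁻¹)) *
      (1 + (n : ℂ)⁻¹) ^ (-w) - 1) =O[atTop] fun n => ((n : ℝ) ^ 2)⁻¹ :=
    (isBigO_norm_right.2 ((Complex.one_add_mul_div_mul_one_add_cpow_neg_sub_one_isBigO a w)
      |>.comp_tendsto tendsto_inv_atTop_nhds_zero_nat)).congr_right (by simp)
  have hdiff : (fun n => f (n + 1) - f n) =O[atTop] fun n => ((n : ℝ) ^ 2)⁻¹ := by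
    refine ((hf.isBigO_one ℝ).mul hratio).congr' ?_ (by simp)
    filter_upwards [eventually_ne_atTop 0] with n hn
    simp only [f, gammaProd_succ_mul_cpow_neg a w hn]
    ring
  have hpow : (fun n : ℕ => (n : ℂ) ^ w) =O[atTop] fun n => (n : ℝ) ^ w.re := by
    refine (isBigO_norm_right.2 (isBigO_refl _ _)).congr' .rfl ?_
    filter_upwards [eventually_gt_atTop 0] with n hn
    exact Complex.norm_natCast_cpow_of_pos hn w
  refine ((isBigO_sub_of_tendsto_of_isBigO_sub_succ hf hdiff).mul hpow).congr' ?_ ?_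
  · filter_upwards [eventually_ne_atTop 0] with n hn
    have hcancel : (n : ℂ) ^ (-w) * (n : ℂ) ^ w = 1 := by
      rw [Complex.cpow_neg, inv_mul_cancel₀ (Complex.cpow_ne_zero_iff.mpr (.inl (by simpa)))]
    linear_combination gammaProd a w n * hcancel
  · filter_upwards [eventually_gt_atTop 0] with n hn
    rw [Real.rpow_sub_one (by positivity), div_eq_inv_mul]

/-- Gamma ratio asymptotics for the product `γ_n = ∏_{j<n} (1 + λ/(r j + s))`. -/
theorem gamma_ratio_asymptotic (r s : ℝ) (hr : 0 < r) (hs : 0 < s)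
    (lm : ℂ) (hlm : 0 < lm.re) :
    (fun n : ℕ => (∏ j ∈ Finset.range n, (1 + lm / ((r : ℂ) * j + s))) -
        (Complex.Gamma ((s : ℂ) / r) / Complex.Gamma (((s : ℂ) + lm) / r)) *
          (n : ℂ) ^ (lm / (r : ℂ)))
      =O[atTop] fun n : ℕ => (n : ℝ) ^ (lm.re / r - 1) := by
  have hr' : (r : ℂ) ≠ 0 := Complex.ofReal_ne_zero.mpr hr.ne'
  have hfactor : ∀ j : ℕ, 1 + lm / ((r : ℂ) * j + s) = 1 + lm / r / (s / r + j) := by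
    intro j
    rw [div_add' _ _ _ hr', div_div_div_cancel_right₀ hr', mul_comm (j : ℂ), add_comm (s : ℂ)]
  have ha : 0 < ((s : ℂ) / r).re := by rw [Complex.div_ofReal_re]; positivity
  have hb : 0 < ((s : ℂ) / r + lm / r).re := by
    rw [Complex.add_re, Complex.div_ofReal_re, Complex.div_ofReal_re, Complex.ofReal_re]
    positivity
  simpa [gammaProd, hfactor, ← add_div, Complex.div_ofReal_re] using
    gammaProd_sub_mul_cpow_isBigO ha (Complex.Gamma_ne_zero_of_re_pos hb)
end

section
/- Zero-variance rigidity: if E[|Ξ_k|²] = 0 for the limit Ξ_k of the projection martingale, then for all j ≥ 0 almost surely π_k(X_{j+1} − X_j) = (λ̄_k/(r j + |X_0|)) π_k(X_j); in particular the value of π_k(X_{j+1} − X_j) does not depend on the colour drawn at step j+1. -/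
/-!
Write `Y n = π (X n)` and `ρ n = 1 + conj lam / (r n + S)`. Since `u` is an eigenvector of `Δ`,
the jump of `Y` at step `n + 1` is `conj lam * conj (u (N (n+1)))`, and averaging over the colour
drawn gives `E[Y (n+1) g] = ρ n E[Y n g]` for every `F n`-measurable `g`. Hence
`M n = (∏ j < n, ρ j)⁻¹ (Y n - E[Y n])` is a martingale, so by orthogonality of its increments
`E|M n|²` is nondecreasing; as it tends to `E|Ξ|² = 0`, every `M n` vanishes a.s. Thus `Y n` is
a.s. equal to its mean `e n`, and `e (n+1) = ρ n e n` is the claimed relation.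
-/

open MeasureTheory Filter

section SecondMoments

variable {Ω : Type*} {mΩ : MeasurableSpace Ω} {μ : Measure Ω}

theorem integral_norm_sq_eq_toReal_eLpNorm_sq {E : Type*} [NormedAddCommGroup E] {f : Ω → E}
    (hf : AEStronglyMeasurable f μ) :
    ∫ ω, ‖f ω‖ ^ 2 ∂μ = (eLpNorm f 2 μ).toReal ^ 2 := by
  have h := lpNorm_nnreal_eq_integral_norm_rpow (p := 2) two_ne_zero hf
  push_cast at h
  rw [toReal_eLpNorm hf, h, ← Real.rpow_natCast,
    ← Real.rpow_mul (integral_nonneg fun _ => by positivity)]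
  norm_num

theorem tendsto_integral_norm_sq_of_tendsto_eLpNorm_sub {E : Type*} [NormedAddCommGroup E]
    {M : ℕ → Ω → E} {Ξ : Ω → E} (hM : ∀ n, MemLp (M n) 2 μ) (hΞ : AEStronglyMeasurable Ξ μ)
    (hL2 : Tendsto (fun n => eLpNorm (fun ω => M n ω - Ξ ω) 2 μ) atTop (nhds 0))
    (hvar : ∫ ω, ‖Ξ ω‖ ^ 2 ∂μ = 0) :
    Tendsto (fun n => ∫ ω, ‖M n ω‖ ^ 2 ∂μ) atTop (nhds 0) := by
  obtain ⟨n, hn⟩ := (hL2.eventually_lt_const ENNReal.zero_lt_top).exists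
  have hΞ2 : MemLp Ξ 2 μ := by
    simpa using (hM n).sub ⟨(hM n).1.sub hΞ, hn⟩
  have hΞ0 : Ξ =ᵐ[μ] 0 := by
    have h := (integral_eq_zero_iff_of_nonneg (fun _ => by positivity)
      ((memLp_two_iff_integrable_sq_norm hΞ).1 hΞ2)).1 hvar
    filter_upwards [h] with ω hω
    simpa using hω
  have hsub : ∀ n, eLpNorm (fun ω => M n ω - Ξ ω) 2 μ = eLpNorm (M n) 2 μ := fun n =>
    eLpNorm_congr_ae (hΞ0.mono fun ω h => by simp [h])
  simp only [hsub] at hL2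
  simp only [fun n => integral_norm_sq_eq_toReal_eLpNorm_sq (hM n).1]
  simpa using ((ENNReal.tendsto_toReal ENNReal.zero_ne_top).comp hL2).pow 2

theorem integral_mul_conj_eq {Y Z : Ω → ℂ} (hY : MemLp Y 2 μ) (hZ : MemLp Z 2 μ) :
    ∫ ω, Y ω * (starRingEnd ℂ) (Z ω) ∂μ
      = ∫ ω, Y ω * (Z ω).re ∂μ - Complex.I * ∫ ω, Y ω * (Z ω).im ∂μ := by
  have hre : Integrable (fun ω => Y ω * (Z ω).re) μ := hY.integrable_mul hZ.re.ofReal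
  have him : Integrable (fun ω => Y ω * (Z ω).im) μ := hY.integrable_mul hZ.im.ofReal
  rw [← integral_const_mul, ← integral_sub hre (him.const_mul _)]
  congr 1 with ω
  conv_lhs => rw [← Complex.re_add_im (Z ω)]
  simp only [map_add, map_mul, Complex.conj_ofReal, Complex.conj_I]
  ring

/-- Pythagoras for martingale increments: `Z (n+1) - Z n` is orthogonal in `L²` to every
`m n`-measurable function, in particular to `Z n`. -/
theorem integral_norm_sq_succ_eq_add {m : ℕ → MeasurableSpace Ω} {Z : ℕ → Ω → ℂ}
    (hZm : ∀ n, StronglyMeasurable[m n] (Z n)) (hZ : ∀ n, MemLp (Z n) 2 μ)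
    (htest : ∀ n (g : Ω → ℝ), StronglyMeasurable[m n] g → MemLp g 2 μ →
      ∫ ω, Z (n + 1) ω * g ω ∂μ = ∫ ω, Z n ω * g ω ∂μ) (n : ℕ) :
    ∫ ω, ‖Z (n + 1) ω‖ ^ 2 ∂μ
      = ∫ ω, ‖Z (n + 1) ω - Z n ω‖ ^ 2 ∂μ + ∫ ω, ‖Z n ω‖ ^ 2 ∂μ := by
  have hD : MemLp (fun ω => Z (n + 1) ω - Z n ω) 2 μ := (hZ (n + 1)).sub (hZ n)
  have horth : ∫ ω, ((Z (n + 1) ω - Z n ω) * (starRingEnd ℂ) (Z n ω)).re ∂μ = 0 := by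
    have horth_test : ∀ g : Ω → ℝ, StronglyMeasurable[m n] g → MemLp g 2 μ →
        ∫ ω, (Z (n + 1) ω - Z n ω) * g ω ∂μ = 0 := fun g hgm hg => by
      have h' : Integrable (fun ω => Z (n + 1) ω * g ω) μ := (hZ (n + 1)).integrable_mul hg.ofReal
      have h : Integrable (fun ω => Z n ω * g ω) μ := (hZ n).integrable_mul hg.ofReal
      simp only [sub_mul]
      rw [integral_sub h' h, htest n g hgm hg, sub_self]
    have hint : Integrable (fun ω => (Z (n + 1) ω - Z n ω) * (starRingEnd ℂ) (Z n ω)) μ :=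
      hD.integrable_mul (hZ n).star
    rw [show ∫ ω, ((Z (n + 1) ω - Z n ω) * (starRingEnd ℂ) (Z n ω)).re ∂μ
        = (∫ ω, (Z (n + 1) ω - Z n ω) * (starRingEnd ℂ) (Z n ω) ∂μ).re from integral_re hint,
      integral_mul_conj_eq hD (hZ n),
      horth_test _ (Complex.continuous_re.comp_stronglyMeasurable (hZm n)) (hZ n).re,
      horth_test _ (Complex.continuous_im.comp_stronglyMeasurable (hZm n)) (hZ n).im]
    simp
  have hpt : ∀ ω, ‖Z (n + 1) ω‖ ^ 2 = ‖Z (n + 1) ω - Z n ω‖ ^ 2 + ‖Z n ω‖ ^ 2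
      + 2 * ((Z (n + 1) ω - Z n ω) * (starRingEnd ℂ) (Z n ω)).re := fun ω => by
    simp only [Complex.sq_norm, ← Complex.normSq_add, sub_add_cancel]
  have hsq : ∀ {f : Ω → ℂ}, MemLp f 2 μ → Integrable (fun ω => ‖f ω‖ ^ 2) μ :=
    fun hf => (memLp_two_iff_integrable_sq_norm hf.1).1 hf
  have hsum : Integrable (fun ω => ‖Z (n + 1) ω - Z n ω‖ ^ 2 + ‖Z n ω‖ ^ 2) μ :=
    (hsq hD).add (hsq (hZ n))
  have hcross : Integrable
      (fun ω => 2 * ((Z (n + 1) ω - Z n ω) * (starRingEnd ℂ) (Z n ω)).re) μ :=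
    (hD.integrable_mul (hZ n).star).re.const_mul 2
  simp only [hpt]
  rw [integral_add hsum hcross, integral_add (hsq hD) (hsq (hZ n)), integral_const_mul, horth,
    mul_zero, add_zero]

theorem ae_eq_zero_of_tendsto_integral_norm_sq {m : ℕ → MeasurableSpace Ω} {Z : ℕ → Ω → ℂ}
    (hZm : ∀ n, StronglyMeasurable[m n] (Z n)) (hZ : ∀ n, MemLp (Z n) 2 μ)
    (htest : ∀ n (g : Ω → ℝ), StronglyMeasurable[m n] g → MemLp g 2 μ →
      ∫ ω, Z (n + 1) ω * g ω ∂μ = ∫ ω, Z n ω * g ω ∂μ)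
    (hlim : Tendsto (fun n => ∫ ω, ‖Z n ω‖ ^ 2 ∂μ) atTop (nhds 0)) (n : ℕ) :
    Z n =ᵐ[μ] 0 := by
  have hmono : Monotone fun n => ∫ ω, ‖Z n ω‖ ^ 2 ∂μ := monotone_nat_of_le_succ fun n => by
    rw [integral_norm_sq_succ_eq_add (m := m) hZm hZ htest n]
    exact le_add_of_nonneg_left (integral_nonneg fun _ => by positivity)
  have h0 : ∫ ω, ‖Z n ω‖ ^ 2 ∂μ = 0 :=
    le_antisymm (hmono.ge_of_tendsto hlim n) (integral_nonneg fun _ => by positivity)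
  have hint := (memLp_two_iff_integrable_sq_norm (hZ n).1).1 (hZ n)
  filter_upwards [(integral_eq_zero_iff_of_nonneg (fun _ => by positivity) hint).1 h0] with ω hω
  simpa using hω

variable [IsFiniteMeasure μ] {m : ℕ → MeasurableSpace Ω} {Y : ℕ → Ω → ℂ} {ρ : ℕ → ℂ}

theorem integral_succ_eq_mul
    (htest : ∀ n (g : Ω → ℝ), StronglyMeasurable[m n] g → MemLp g 2 μ →
      ∫ ω, Y (n + 1) ω * g ω ∂μ = ρ n * ∫ ω, Y n ω * g ω ∂μ) (n : ℕ) :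
    ∫ ω, Y (n + 1) ω ∂μ = ρ n * ∫ ω, Y n ω ∂μ := by
  simpa using htest n (fun _ => 1) stronglyMeasurable_const (memLp_const 1)

theorem integral_normalized_succ_mul_eq (hY : ∀ n, MemLp (Y n) 2 μ) (hρ : ∀ n, ρ n ≠ 0)
    (htest : ∀ n (g : Ω → ℝ), StronglyMeasurable[m n] g → MemLp g 2 μ →
      ∫ ω, Y (n + 1) ω * g ω ∂μ = ρ n * ∫ ω, Y n ω * g ω ∂μ)
    (n : ℕ) (g : Ω → ℝ) (hgm : StronglyMeasurable[m n] g) (hg : MemLp g 2 μ) :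
    ∫ ω, (∏ j ∈ Finset.range (n + 1), ρ j)⁻¹ * (Y (n + 1) ω - ∫ ω', Y (n + 1) ω' ∂μ) * g ω ∂μ
      = ∫ ω, (∏ j ∈ Finset.range n, ρ j)⁻¹ * (Y n ω - ∫ ω', Y n ω' ∂μ) * g ω ∂μ := by
  have hcentre : ∀ k (c : ℂ), ∫ ω, c * (Y k ω - ∫ ω', Y k ω' ∂μ) * g ω ∂μ
      = c * (∫ ω, Y k ω * g ω ∂μ - (∫ ω', Y k ω' ∂μ) * ∫ ω, (g ω : ℂ) ∂μ) := fun k c => by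
    have hYg : Integrable (fun ω => Y k ω * g ω) μ := (hY k).integrable_mul hg.ofReal
    have hg1 : Integrable (fun ω => (g ω : ℂ)) μ := (hg.integrable one_le_two).ofReal
    rw [← integral_const_mul, ← integral_sub hYg (hg1.const_mul _), ← integral_const_mul]
    congr 1 with ω
    ring
  rw [hcentre, hcentre, htest n g hgm hg, integral_succ_eq_mul (m := m) htest,
    Finset.prod_range_succ, mul_inv, mul_assoc, mul_assoc, ← mul_sub, inv_mul_cancel_left₀ (hρ n)]

/-- The normalized process is a martingale whose second moments increase to `0`, so it vanishes:
each `Y k` is a.s. equal to its mean. -/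
theorem ae_sub_eq_mul_of_tendsto_integral_norm_sq (hYm : ∀ n, StronglyMeasurable[m n] (Y n))
    (hY : ∀ n, MemLp (Y n) 2 μ) (hρ : ∀ n, ρ n ≠ 0)
    (htest : ∀ n (g : Ω → ℝ), StronglyMeasurable[m n] g → MemLp g 2 μ →
      ∫ ω, Y (n + 1) ω * g ω ∂μ = ρ n * ∫ ω, Y n ω * g ω ∂μ)
    (hlim : Tendsto (fun n => ∫ ω, ‖(∏ j ∈ Finset.range n, ρ j)⁻¹
      * (Y n ω - ∫ ω', Y n ω' ∂μ)‖ ^ 2 ∂μ) atTop (nhds 0)) (n : ℕ) :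
    ∀ᵐ ω ∂μ, Y (n + 1) ω - Y n ω = (ρ n - 1) * Y n ω := by
  have hconst : ∀ k, ∀ᵐ ω ∂μ, Y k ω = ∫ ω', Y k ω' ∂μ := fun k => by
    have h := ae_eq_zero_of_tendsto_integral_norm_sq (m := m)
      (Z := fun k ω => (∏ j ∈ Finset.range k, ρ j)⁻¹ * (Y k ω - ∫ ω', Y k ω' ∂μ))
      (fun k => stronglyMeasurable_const.mul ((hYm k).sub stronglyMeasurable_const))
      (fun k => ((hY k).sub (memLp_const _)).const_mul _)
      (integral_normalized_succ_mul_eq (m := m) hY hρ htest) hlim k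
    filter_upwards [h] with ω hω
    have hc : (∏ j ∈ Finset.range k, ρ j)⁻¹ ≠ 0 :=
      inv_ne_zero (Finset.prod_ne_zero_iff.2 fun j _ => hρ j)
    simpa [hc, sub_eq_zero] using hω
  filter_upwards [hconst n, hconst (n + 1)] with ω hn hn1
  rw [hn, hn1, integral_succ_eq_mul (m := m) htest]
  ring

end SecondMoments

noncomputable def eigenProj {q : ℕ} (u : Fin q → ℂ) : (Fin q → ℝ) →L[ℝ] ℂ :=
  ∑ i, (starRingEnd ℂ) (u i) • Complex.ofRealCLM.comp (ContinuousLinearMap.proj i)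

theorem eigenProj_apply {q : ℕ} (u : Fin q → ℂ) (x : Fin q → ℝ) :
    eigenProj u x = ∑ i, (starRingEnd ℂ) (u i) * (x i : ℂ) := by
  simp [eigenProj]

theorem eigenProj_row {q : ℕ} {Δ : Fin q → Fin q → ℝ} {u : Fin q → ℂ} {lam : ℂ}
    (hu : ∀ j : Fin q, ∑ i : Fin q, u i * (Δ j i : ℂ) = lam * u j) (p : Fin q) :
    eigenProj u (Δ p) = (starRingEnd ℂ) lam * (starRingEnd ℂ) (u p) := by
  simpa [eigenProj_apply, mul_comm] using congrArg (starRingEnd ℂ) (hu p)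

theorem integral_sum_mul_ofReal {Ω ι : Type*} {mΩ : MeasurableSpace Ω} {μ : Measure Ω}
    (s : Finset ι) (f : ι → ℂ) {h : ι → Ω → ℝ} (hh : ∀ i ∈ s, Integrable (h i) μ) :
    ∫ ω, ∑ i ∈ s, f i * (h i ω : ℂ) ∂μ = ∑ i ∈ s, f i * ((∫ ω, h i ω ∂μ : ℝ) : ℂ) := by
  refine (integral_finsetSum s fun i hi => (hh i hi).ofReal.const_mul (f i)).trans ?_
  refine Finset.sum_congr rfl fun i _ => ?_
  rw [integral_const_mul]
  exact congrArg _ integral_complex_ofReal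

theorem one_add_div_ofReal_ne_zero {z : ℂ} {t : ℝ} (hz : 0 ≤ z.re) (ht : 0 < t) :
    1 + z / t ≠ 0 := by
  intro h
  have h' := congrArg Complex.re h
  rw [Complex.add_re, Complex.one_re, Complex.div_ofReal_re, Complex.zero_re] at h'
  have : 0 ≤ z.re / t := div_nonneg hz ht.le
  linarith

section Urn

variable {Ω : Type*} {mΩ : MeasurableSpace Ω} {μ : Measure Ω} {q : ℕ} {Δ : Fin q → Fin q → ℝ}
  {X : ℕ → Ω → Fin q → ℝ} {N : ℕ → Ω → Fin q} {x0 : Fin q → ℝ}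

theorem urn_succ (hstep : ∀ n ω j, X (n + 1) ω j = X n ω j + Δ (N (n + 1) ω) j) (n : ℕ) :
    X (n + 1) = fun ω => X n ω + Δ (N (n + 1) ω) :=
  funext fun ω => funext (hstep n ω)

theorem measurable_urn {F : Filtration ℕ mΩ} (hX0 : ∀ ω, X 0 ω = x0)
    (hstep : ∀ n ω j, X (n + 1) ω j = X n ω j + Δ (N (n + 1) ω) j)
    (hN : ∀ n, Measurable[F n] (N n)) (n : ℕ) : Measurable[F n] (X n) := by
  induction n with
  | zero => simp [funext hX0]
  | succ n ih =>
    rw [urn_succ hstep]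
    exact (ih.mono (F.mono n.le_succ) le_rfl).add (measurable_from_top.comp (hN (n + 1)))

theorem memLp_top_urn (hX0 : ∀ ω, X 0 ω = x0)
    (hstep : ∀ n ω j, X (n + 1) ω j = X n ω j + Δ (N (n + 1) ω) j)
    (hN : ∀ n, Measurable (N n)) (n : ℕ) : MemLp (X n) ⊤ μ := by
  induction n with
  | zero => simpa [funext hX0] using memLp_top_const x0
  | succ n ih =>
    rw [urn_succ hstep]
    refine ih.add (memLp_top_of_bound (measurable_from_top.comp (hN (n + 1))).aestronglyMeasurable
      (∑ p, ‖Δ p‖) (ae_of_all _ fun ω => ?_))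
    exact Finset.single_le_sum (f := fun p => ‖Δ p‖) (fun _ _ => norm_nonneg _) (Finset.mem_univ _)

variable [IsFiniteMeasure μ] {F : Filtration ℕ mΩ} {r S : ℝ}

theorem integral_comp_draw_mul (hN : ∀ n, Measurable (N n))
    (hcond : ∀ n (i : Fin q) (g : Ω → ℝ), StronglyMeasurable[F n] g → Integrable g μ →
      μ[(fun ω => (if N (n + 1) ω = i then (1 : ℝ) else 0) * g ω) | F n]
        =ᵐ[μ] fun ω => X n ω i / (r * n + S) * g ω)
    {n : ℕ} (hX : MemLp (X n) ⊤ μ) (f : Fin q → ℂ) {g : Ω → ℝ}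
    (hgm : StronglyMeasurable[F n] g) (hg : Integrable g μ) :
    ∫ ω, f (N (n + 1) ω) * g ω ∂μ
      = ((r : ℂ) * n + S)⁻¹ * ∫ ω, (∑ i, f i * X n ω i) * g ω ∂μ := by
  have hdraw : ∀ i, Integrable (fun ω => (if N (n + 1) ω = i then (1 : ℝ) else 0) * g ω) μ :=
    fun i => hg.bdd_mul (c := 1)
      ((measurable_const.ite ((hN (n + 1)) (measurableSet_singleton i))
        measurable_const).aestronglyMeasurable)
      (ae_of_all _ fun ω => by split_ifs <;> simp)
  have hcoord : ∀ i, Integrable (fun ω => X n ω i / (r * n + S) * g ω) μ := fun i => by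
    have hXi : MemLp (fun ω => X n ω i) ⊤ μ :=
      (ContinuousLinearMap.proj (R := ℝ) (φ := fun _ : Fin q => ℝ) i).comp_memLp' hX
    simpa [div_eq_inv_mul, mul_assoc] using
      (hXi.integrable_mul (memLp_one_iff_integrable.2 hg)).const_mul (r * n + S)⁻¹
  calc ∫ ω, f (N (n + 1) ω) * g ω ∂μ
      = ∫ ω, ∑ i, f i * (((if N (n + 1) ω = i then (1 : ℝ) else 0) * g ω : ℝ) : ℂ) ∂μ := by
        congr 1 with ω
        simp [apply_ite (fun x : ℝ => (x : ℂ)), mul_ite]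
    _ = ∑ i, f i * ((∫ ω, X n ω i / (r * n + S) * g ω ∂μ : ℝ) : ℂ) := by
        rw [integral_sum_mul_ofReal _ _ fun i _ => hdraw i]
        refine Finset.sum_congr rfl fun i _ => ?_
        rw [← integral_condExp (F.le n), integral_congr_ae (hcond n i g hgm hg)]
    _ = ∫ ω, ∑ i, f i * ((X n ω i / (r * n + S) * g ω : ℝ) : ℂ) ∂μ :=
        (integral_sum_mul_ofReal _ _ fun i _ => hcoord i).symm
    _ = ((r : ℂ) * n + S)⁻¹ * ∫ ω, (∑ i, f i * X n ω i) * g ω ∂μ := by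
        rw [← integral_const_mul]
        congr 1 with ω
        simp only [Finset.mul_sum, Finset.sum_mul]
        refine Finset.sum_congr rfl fun i _ => ?_
        push_cast
        ring

theorem integral_eigenProj_urn_succ_mul {u : Fin q → ℂ} {lam : ℂ}
    (hu : ∀ j : Fin q, ∑ i : Fin q, u i * (Δ j i : ℂ) = lam * u j)
    (hstep : ∀ n ω j, X (n + 1) ω j = X n ω j + Δ (N (n + 1) ω) j)
    (hN : ∀ n, Measurable (N n))
    (hcond : ∀ n (i : Fin q) (g : Ω → ℝ), StronglyMeasurable[F n] g → Integrable g μ →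
      μ[(fun ω => (if N (n + 1) ω = i then (1 : ℝ) else 0) * g ω) | F n]
        =ᵐ[μ] fun ω => X n ω i / (r * n + S) * g ω)
    {n : ℕ} (hX : MemLp (X n) ⊤ μ) {g : Ω → ℝ}
    (hgm : StronglyMeasurable[F n] g) (hg : Integrable g μ) :
    ∫ ω, eigenProj u (X (n + 1) ω) * g ω ∂μ
      = (1 + (starRingEnd ℂ) lam / ((r : ℂ) * n + S)) * ∫ ω, eigenProj u (X n ω) * g ω ∂μ := by
  have hjump : ∀ ω, eigenProj u (X (n + 1) ω) * g ω = eigenProj u (X n ω) * g ω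
      + (starRingEnd ℂ) lam * ((starRingEnd ℂ) (u (N (n + 1) ω)) * g ω) :=
    fun ω => by rw [urn_succ hstep, map_add, eigenProj_row hu]; ring
  have hg1 : MemLp (fun ω => (g ω : ℂ)) 1 μ := (memLp_one_iff_integrable.2 hg).ofReal
  have hprev : Integrable (fun ω => eigenProj u (X n ω) * g ω) μ :=
    ((eigenProj u).comp_memLp' hX).integrable_mul hg1
  have hdraw : Integrable (fun ω => (starRingEnd ℂ) (u (N (n + 1) ω)) * g ω) μ :=
    (hg.ofReal.bdd_mul (c := ∑ i, ‖u i‖)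
      ((measurable_from_top (f := fun i => (starRingEnd ℂ) (u i))).comp
        (hN (n + 1))).aestronglyMeasurable
      (ae_of_all _ fun ω => by
        simpa using Finset.single_le_sum (f := fun i => ‖u i‖) (fun _ _ => norm_nonneg _)
          (Finset.mem_univ (N (n + 1) ω))))
  simp only [hjump]
  rw [integral_add hprev (hdraw.const_mul _), integral_const_mul,
    integral_comp_draw_mul hN hcond hX (fun i => (starRingEnd ℂ) (u i)) hgm hg]
  simp only [← eigenProj_apply]
  ring

end Urn

theorem zero_variance_rigidity_general
    {Ω : Type*} {mΩ : MeasurableSpace Ω} {μ : Measure Ω} [IsProbabilityMeasure μ]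
    {q : ℕ} (Δ : Fin q → Fin q → ℝ) (r S : ℝ) (hr : 0 < r) (hS : 0 < S)
    (u : Fin q → ℂ) (lam : ℂ)
    (hu : ∀ j : Fin q, ∑ i : Fin q, u i * (Δ j i : ℂ) = lam * u j)
    (hbig : r / 2 < lam.re)
    (F : Filtration ℕ mΩ) (X : ℕ → Ω → Fin q → ℝ) (N : ℕ → Ω → Fin q)
    (x0 : Fin q → ℝ) (hX0 : ∀ ω, X 0 ω = x0)
    (hstep : ∀ n ω j, X (n + 1) ω j = X n ω j + Δ (N (n + 1) ω) j)
    (hN : ∀ n, Measurable[F n] (N n))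
    (hcond : ∀ n (i : Fin q) (g : Ω → ℝ), StronglyMeasurable[F n] g → Integrable g μ →
      μ[(fun ω => (if N (n + 1) ω = i then (1 : ℝ) else 0) * g ω) | F n]
        =ᵐ[μ] fun ω => X n ω i / (r * n + S) * g ω)
    (π : (Fin q → ℝ) → ℂ)
    (hπ : ∀ x, π x = ∑ i : Fin q, (starRingEnd ℂ) (u i) * (x i : ℂ))
    (M : ℕ → Ω → ℂ)
    (hM : ∀ n ω, M n ω =
      (∏ j ∈ Finset.range n, (1 + (starRingEnd ℂ) lam / ((r : ℂ) * j + S)))⁻¹ *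
        (π (X n ω) - ∫ ω', π (X n ω') ∂μ))
    (Ξ : Ω → ℂ)
    (hlim : ∀ᵐ ω ∂μ, Tendsto (fun n => M n ω) atTop (nhds (Ξ ω)))
    (hL2 : Tendsto (fun n => eLpNorm (fun ω => M n ω - Ξ ω) 2 μ) atTop (nhds 0))
    (hvar : (∫ ω, ‖Ξ ω‖ ^ 2 ∂μ) = 0) :
    ∀ j : ℕ, ∀ᵐ ω ∂μ,
      π (X (j + 1) ω) - π (X j ω) =
        (starRingEnd ℂ) lam / ((r : ℂ) * j + S) * π (X j ω) := by
  obtain rfl : π = eigenProj u := funext fun x => (hπ x).trans (eigenProj_apply u x).symm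
  have hNm : ∀ n, Measurable (N n) := fun n => (hN n).mono (F.le n) le_rfl
  have hX : ∀ n, MemLp (X n) ⊤ μ := memLp_top_urn hX0 hstep hNm
  have hY : ∀ n, MemLp (fun ω => eigenProj u (X n ω)) 2 μ := fun n =>
    ((eigenProj u).comp_memLp' (hX n)).mono_exponent le_top
  have hρ : ∀ n : ℕ, 1 + (starRingEnd ℂ) lam / ((r : ℂ) * n + S) ≠ 0 := fun n => by
    have hre : 0 ≤ ((starRingEnd ℂ) lam).re := by
      rw [Complex.conj_re]; linarith
    exact_mod_cast one_add_div_ofReal_ne_zero hre (by positivity : 0 < r * n + S)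
  have hM2 : ∀ n, MemLp (M n) 2 μ := fun n => by
    rw [funext (hM n)]
    exact ((hY n).sub (memLp_const _)).const_mul _
  have hΞ : AEStronglyMeasurable Ξ μ :=
    aestronglyMeasurable_of_tendsto_ae atTop (fun n => (hM2 n).1) hlim
  have hmoments := tendsto_integral_norm_sq_of_tendsto_eLpNorm_sub hM2 hΞ hL2 hvar
  simp only [hM] at hmoments
  intro j
  filter_upwards [ae_sub_eq_mul_of_tendsto_integral_norm_sq (m := fun n => F n)
    (fun n => (eigenProj u).continuous.comp_stronglyMeasurable
      (measurable_urn hX0 hstep hN n).stronglyMeasurable) hY hρ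
    (fun n g hgm hg => integral_eigenProj_urn_succ_mul hu hstep hNm hcond (hX n) hgm
      (hg.integrable one_le_two)) hmoments j] with ω hω
  rw [hω, add_sub_cancel_left]

/-- Zero-variance rigidity: if the limit `Ξ` of the projection martingale satisfies
`E[|Ξ|²] = 0`, then for all `j` almost surely
`π(X (j+1) − X j) = (conj lam/(r j + S)) π(X j)`; in particular the jump of the
projection does not depend on the colour drawn at step `j+1`. -/
theorem zero_variance_rigidity
    {Ω : Type*} {mΩ : MeasurableSpace Ω} {μ : Measure Ω} [IsProbabilityMeasure μ]
    {q : ℕ} (Δ : Fin q → Fin q → ℝ) (r S : ℝ) (hr : 0 < r) (hS : 0 < S)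
    (u : Fin q → ℂ) (lam : ℂ)
    (hu : ∀ j : Fin q, ∑ i : Fin q, u i * (Δ j i : ℂ) = lam * u j)
    (hbig : r / 2 < lam.re)
    (F : Filtration ℕ mΩ) (X : ℕ → Ω → Fin q → ℝ) (N : ℕ → Ω → Fin q)
    (x0 : Fin q → ℝ) (hX0 : ∀ ω, X 0 ω = x0) (hS0 : S = ∑ i : Fin q, x0 i)
    (hstep : ∀ n ω j, X (n + 1) ω j = X n ω j + Δ (N (n + 1) ω) j)
    (hN : ∀ n, Measurable[F n] (N n))
    (hcond : ∀ n (i : Fin q) (g : Ω → ℝ), StronglyMeasurable[F n] g → Integrable g μ →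
      μ[(fun ω => (if N (n + 1) ω = i then (1 : ℝ) else 0) * g ω) | F n]
        =ᵐ[μ] fun ω => X n ω i / (r * n + S) * g ω)
    (π : (Fin q → ℝ) → ℂ)
    (hπ : ∀ x, π x = ∑ i : Fin q, (starRingEnd ℂ) (u i) * (x i : ℂ))
    (M : ℕ → Ω → ℂ)
    (hM : ∀ n ω, M n ω =
      (∏ j ∈ Finset.range n, (1 + (starRingEnd ℂ) lam / ((r : ℂ) * j + S)))⁻¹ *
        (π (X n ω) - ∫ ω', π (X n ω') ∂μ))
    (Ξ : Ω → ℂ)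
    (hlim : ∀ᵐ ω ∂μ, Tendsto (fun n => M n ω) atTop (nhds (Ξ ω)))
    (hL2 : Tendsto (fun n => eLpNorm (fun ω => M n ω - Ξ ω) 2 μ) atTop (nhds 0))
    (hvar : (∫ ω, ‖Ξ ω‖ ^ 2 ∂μ) = 0) :
    ∀ j : ℕ, ∀ᵐ ω ∂μ,
      π (X (j + 1) ω) - π (X j ω) =
        (starRingEnd ℂ) lam / ((r : ℂ) * j + S) * π (X j ω) :=
  zero_variance_rigidity_general Δ r S hr hS u lam hu hbig F X N x0 hX0 hstep hN hcond π hπ M hM Ξ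
    hlim hL2 hvar
end

section
/- Characteristic polynomial of the m-ary search tree urn matrix: the eigenvalues of the (m−1)×(m−1) matrix R_m with diagonal entries −1, −2, …, −(m−1), subdiagonal entries 2, 3, …, m−1, top-right entry m, and zeros elsewhere, are exactly the complex solutions z of m! = ∏_{k=1}^{m−1} (z + k); in particular z = 1 is always an eigenvalue. -/
/-!
The characteristic matrix `z • 1 - R_m` is lower bidiagonal apart from the corner entry `-m`.
Expanding along the first row leaves two triangular minors: the one on the diagonal gives
`∏_{k=1}^{m-1} (z + k)`, and the corner contributes `-m · (m - 1)! = -m!`, since the cofactor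
sign cancels the signs of the subdiagonal entries `-2, …, -(m - 1)`. At `z = 1` the product is
`2 · 3 ⋯ m = m!`.
-/

open Finset

namespace Matrix

variable {R : Type*} [CommRing R]

theorem det_of_support_subset_bidiagonal_corner {n : ℕ}
    (A : Matrix (Fin (n + 2)) (Fin (n + 2)) R)
    (hA : ∀ i j : Fin (n + 2), i ≠ j → (j : ℕ) + 1 ≠ i → ¬(i = 0 ∧ j = Fin.last (n + 1)) →
      A i j = 0) :
    A.det = ∏ i, A i i +
      (-1) ^ (n + 1) * A 0 (Fin.last (n + 1)) * ∏ i : Fin (n + 1), A i.succ i.castSucc := by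
  have hdiag : (A.submatrix Fin.succ Fin.succ).det = ∏ i : Fin (n + 1), A i.succ i.succ :=
    det_of_isLowerTriangular _ fun i j (hij : i < j) =>
      hA _ _ (by simpa using hij.ne) (by simp; omega) (by simp)
  have hsub : (A.submatrix Fin.succ Fin.castSucc).det = ∏ i : Fin (n + 1), A i.succ i.castSucc :=
    det_of_isUpperTriangular fun i j (hij : j < i) =>
      hA _ _ (by simp [Fin.ext_iff]; omega) (by simp; omega) (by simp)
  have hrow : ∀ j ∉ ({0, Fin.last (n + 1)} : Finset _),
      (-1) ^ (j : ℕ) * A 0 j * (A.submatrix Fin.succ j.succAbove).det = 0 := by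
    intro j hj
    simp only [mem_insert, mem_singleton, not_or] at hj
    rw [hA 0 j (Ne.symm hj.1) (by simp) (by simp [hj.2]), mul_zero, zero_mul]
  rw [det_succ_row_zero, ← sum_subset (subset_univ _) fun j _ => hrow j,
    sum_pair (by simp [Fin.ext_iff]), Fin.succAbove_zero, Fin.succAbove_last, hdiag, hsub,
    Fin.prod_univ_succ fun i => A i i, Fin.val_zero, Fin.val_last, pow_zero, one_mul]

end Matrix

open Matrix Polynomial Nat

theorem Finset.prod_Icc_one_eq_prod_fin {M : Type*} [CommMonoid M] (f : ℕ → M) (n : ℕ) :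
    ∏ k ∈ Icc 1 n, f k = ∏ i : Fin n, f (i + 1) := by
  rw [Fin.prod_univ_eq_prod_range (fun i => f (i + 1)), range_eq_Ico, prod_Ico_add' f 0 n 1,
    zero_add, Ico_add_one_right_eq_Icc]

theorem Fin.prod_univ_natCast_add_two_eq_factorial {R : Type*} [CommSemiring R] (n : ℕ) :
    ∏ i : Fin n, ((i : ℕ) + 2 : R) = (n + 1)! := by
  rw [Fin.prod_univ_eq_prod_range (fun i : ℕ => (i : R) + 2), ← prod_range_add_one_eq_factorial,
    prod_range_succ']
  push_cast
  simp only [mul_one, add_assoc, one_add_one_eq_two]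

theorem Finset.prod_Icc_one_add_eq_factorial {R : Type*} [CommSemiring R] (n : ℕ) :
    ∏ k ∈ Icc 1 n, (1 + k : R) = (n + 1)! := by
  rw [prod_Icc_one_eq_prod_fin, ← Fin.prod_univ_natCast_add_two_eq_factorial]
  refine prod_congr rfl fun i _ => ?_
  push_cast; ring

/-- Type `i` stands for the gaps of a node holding `i` keys; a full node (type `m - 2`) splits
into `m` empty nodes. -/
def urnMatrix (m : ℕ) : Matrix (Fin (m - 1)) (Fin (m - 1)) ℂ :=
  of fun i j =>
    if (i : ℕ) = (j : ℕ) + 1 then ((i : ℕ) + 1 : ℂ)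
    else if (i : ℕ) = 0 ∧ (j : ℕ) = m - 2 then (m : ℂ)
    else if i = j then -((i : ℕ) + 1 : ℂ)
    else 0

theorem eval_charpoly_urnMatrix (m : ℕ) (hm : 3 ≤ m) (z : ℂ) :
    (urnMatrix m).charpoly.eval z = ∏ k ∈ Icc 1 (m - 1), (z + k) - m ! := by
  obtain ⟨n, rfl⟩ : ∃ n, m = n + 3 := ⟨m - 3, by omega⟩
  set A : Matrix (Fin (n + 2)) (Fin (n + 2)) ℂ := scalar _ z - urnMatrix (n + 3)
  have hentry : ∀ i j, A i j = (if i = j then z else 0) -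
      if (i : ℕ) = j + 1 then ((i : ℕ) + 1 : ℂ)
      else if (i : ℕ) = 0 ∧ (j : ℕ) = n + 1 then ((n + 3 : ℕ) : ℂ)
      else if i = j then -((i : ℕ) + 1 : ℂ) else 0 := fun i j => rfl
  have hdiag : ∀ i, A i i = z + ((i : ℕ) + 1) := fun i => by
    rw [hentry, if_pos rfl, if_neg (by omega), if_neg (by omega), if_pos rfl]; ring
  have hsub : ∀ i : Fin (n + 1), A i.succ i.castSucc = -((i : ℕ) + 2) := fun i => by
    rw [hentry, if_neg Fin.castSucc_lt_succ.ne', if_pos (by simp)]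
    push_cast [Fin.val_succ]; ring
  have hcorner : A 0 (Fin.last (n + 1)) = -((n + 3 : ℕ) : ℂ) := by
    rw [hentry, if_neg (by simp [Fin.ext_iff]), if_neg (by simp), if_pos (by simp), zero_sub]
  rw [eval_charpoly, det_of_support_subset_bidiagonal_corner A fun i j h₁ h₂ h₃ => ?_]
  · simp only [hdiag, hsub, hcorner]
    -- `Fin (n + 3 - 1)` must become `Fin (n + 2)` for the two products to be recognised as equal
    rw [show n + 3 - 1 = n + 2 from rfl, prod_Icc_one_eq_prod_fin, prod_neg,
      Fin.prod_univ_natCast_add_two_eq_factorial, Finset.card_univ, Fintype.card_fin,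
      Nat.factorial_succ (n + 2)]
    have hsign : ((-1 : ℂ) ^ (n + 1)) * (-1) ^ (n + 1) = 1 := by rw [← mul_pow]; norm_num
    push_cast
    linear_combination (-((n : ℂ) + 3) * (n + 2)!) * hsign
  · rw [hentry, if_neg h₁, if_neg (Ne.symm h₂), if_neg, if_neg h₁, sub_zero]
    rw [Fin.ext_iff, Fin.ext_iff, Fin.val_last, Fin.val_zero] at h₃
    omega

/-- Characteristic polynomial of the `m`-ary search tree urn matrix: the
eigenvalues of the `(m−1) × (m−1)` matrix `R_m` (diagonal `−1, …, −(m−1)`,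
subdiagonal `2, …, m−1`, top-right entry `m`) are exactly the complex solutions of
`m! = ∏_{k=1}^{m−1} (z + k)`; in particular `z = 1` is always an eigenvalue. -/
theorem mary_search_tree_eigenvalues (m : ℕ) (hm : 3 ≤ m)
    (R : Matrix (Fin (m - 1)) (Fin (m - 1)) ℂ)
    (hR : ∀ i j : Fin (m - 1), R i j =
      if (i : ℕ) = (j : ℕ) + 1 then ((i : ℕ) + 1 : ℂ)
      else if (i : ℕ) = 0 ∧ (j : ℕ) = m - 2 then (m : ℂ)
      else if i = j then -((i : ℕ) + 1 : ℂ)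
      else 0) :
    (∀ z : ℂ, z ∈ spectrum ℂ R ↔
      ∏ k ∈ Finset.Icc 1 (m - 1), (z + (k : ℂ)) = (Nat.factorial m : ℂ)) ∧
    (1 : ℂ) ∈ spectrum ℂ R := by
  obtain rfl : R = urnMatrix m := Matrix.ext hR
  have hspec : ∀ z : ℂ, z ∈ spectrum ℂ (urnMatrix m) ↔ ∏ k ∈ Icc 1 (m - 1), (z + k) = m ! :=
    fun z => by
      rw [mem_spectrum_iff_isRoot_charpoly, IsRoot.def, eval_charpoly_urnMatrix m hm, sub_eq_zero]
  refine ⟨hspec, (hspec 1).2 ?_⟩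
  rw [prod_Icc_one_add_eq_factorial, Nat.sub_add_cancel (by omega : 1 ≤ m)]
end

section
/- Characteristic polynomial of the B-urn matrix: the eigenvalues of the m×m matrix R_m with diagonal entries −m, −(m+1), …, −(2m−1), subdiagonal entries m+1, m+2, …, 2m−1, top-right entry 2m, and zeros elsewhere, are exactly the solutions z of (2m)!/m! = ∏_{k=m}^{2m−1} (z + k); all these roots are simple, z = 1 is a root, and every other root λ satisfies Re(λ) < 1. -/
/-!
Expanding `det (X - R_m)` along the first row (apart from its corner entry, `R_m` is lower
bidiagonal) gives `charpoly R_m = q - (2m)!/m!` with `q = ∏_{k=m}^{2m-1} (X + k)`, and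
`(2m)!/m! = q(1)`, so `1` is an eigenvalue. If `Re z ≥ 1` and `z ≠ 1` then `|z + k| > 1 + k` for
every `k`, so `|q(z)| > q(1)`. A multiple root `z` would satisfy `q'(z) = 0`, i.e.
`∑ 1/(z + k) = 0`; the imaginary part of this sum forces `z` to be real, and its sign changes force
`-(2m-1) < z < -m`, where `|z + k| < 1 + k` for every `k`, so again `|q(z)| < q(1)`.
-/

open Polynomial Finset Matrix
open scoped Nat

theorem Nat.factorial_two_mul_div_factorial (m : ℕ) :
    (2 * m)! / m ! = ∏ k ∈ Ico m (2 * m), (1 + k) := by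
  rw [two_mul, ← Nat.ascFactorial_eq_div, Nat.ascFactorial_eq_prod_range,
    prod_Ico_eq_prod_range, add_tsub_cancel_left]
  exact prod_congr rfl fun i _ => by ring

theorem Finset.prod_Ico_two_mul_eq_prod_fin {M : Type*} [CommMonoid M] (f : ℕ → M) (m : ℕ) :
    ∏ k ∈ Ico m (2 * m), f k = ∏ i : Fin m, f (m + i) := by
  rw [prod_Ico_eq_prod_range, two_mul, add_tsub_cancel_left, ← Fin.prod_univ_eq_prod_range]

theorem Matrix.det_lowerBidiagonal_add_corner {R : Type*} [CommRing R] {n : ℕ}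
    (A : Matrix (Fin (n + 2)) (Fin (n + 2)) R)
    (hbelow : ∀ i j : Fin (n + 2), (j : ℕ) + 1 < i → A i j = 0)
    (habove : ∀ i j : Fin (n + 2), i < j → ¬(i = 0 ∧ j = Fin.last _) → A i j = 0) :
    A.det = ∏ i, A i i +
      (-1) ^ (n + 1) * A 0 (Fin.last _) * ∏ i : Fin (n + 1), A i.succ i.castSucc := by
  have hlower : (A.submatrix Fin.succ Fin.succ).IsLowerTriangular := fun i j hij =>
    habove _ _ (Fin.succ_lt_succ_iff.mpr hij) (by simp [Fin.succ_ne_zero])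
  have hupper : (A.submatrix Fin.succ Fin.castSucc).IsUpperTriangular := fun i j hij =>
    hbelow _ _ (by simp only [Fin.val_succ, Fin.val_castSucc]; exact Nat.succ_lt_succ hij)
  rw [Matrix.det_succ_row_zero, Fintype.sum_eq_add 0 (Fin.last _) (Fin.ext_iff.not.mpr (by simp))
    fun j hj => by rw [habove 0 j (Fin.pos_iff_ne_zero.mpr hj.1) (by tauto)]; ring,
    Fin.succAbove_zero, Fin.succAbove_last, Matrix.det_of_isLowerTriangular _ hlower,
    Matrix.det_of_isUpperTriangular hupper, Fin.prod_univ_succ fun i => A i i]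
  simp only [Matrix.submatrix_apply, Fin.val_zero, Fin.val_last, pow_zero, one_mul]

theorem Polynomial.rootMultiplicity_eq_one {R : Type*} [CommRing R] {p : R[X]} {t : R}
    (hp : p ≠ 0) (hroot : p.IsRoot t) (hderiv : ¬(derivative p).IsRoot t) :
    p.rootMultiplicity t = 1 := by
  have hpos := (rootMultiplicity_pos hp).mpr hroot
  have hle := (one_lt_rootMultiplicity_iff_isRoot hp).not.mpr (fun h => hderiv h.2)
  omega

theorem Polynomial.eval_derivative_prod_X_add_C {ι K : Type*} [Field K] [DecidableEq ι]
    (s : Finset ι) (a : ι → K) {z : K} (hz : ∀ k ∈ s, z + a k ≠ 0) :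
    (derivative (∏ k ∈ s, (X + C (a k)))).eval z =
      (∏ k ∈ s, (z + a k)) * ∑ k ∈ s, (z + a k)⁻¹ := by
  rw [derivative_prod_finset, eval_finsetSum, mul_sum]
  refine sum_congr rfl fun j hj => ?_
  simp only [derivative_add, derivative_X, derivative_C, add_zero, mul_one, eval_prod, eval_add,
    eval_X, eval_C]
  rw [← mul_prod_erase s _ hj, mul_comm]
  exact (inv_mul_cancel_left₀ (hz j hj) _).symm

theorem exists_pos_of_sum_inv_eq_zero {ι 𝕜 : Type*} [Field 𝕜] [LinearOrder 𝕜]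
    [IsStrictOrderedRing 𝕜] {s : Finset ι} {w : ι → 𝕜} (hs : s.Nonempty) (hw : ∀ k ∈ s, w k ≠ 0)
    (h : ∑ k ∈ s, (w k)⁻¹ = 0) : ∃ j ∈ s, 0 < w j := by
  by_contra! hnonpos
  have : ∑ k ∈ s, (w k)⁻¹ < 0 :=
    sum_neg (fun k hk => inv_lt_zero.mpr ((hnonpos k hk).lt_of_ne (hw k hk))) hs
  exact this.ne h

theorem Complex.im_eq_zero_of_sum_inv_add_ofReal_eq_zero {ι : Type*} {s : Finset ι}
    {a : ι → ℝ} {z : ℂ} (hs : s.Nonempty) (hz : ∀ k ∈ s, z + a k ≠ 0)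
    (h : ∑ k ∈ s, (z + a k)⁻¹ = 0) : z.im = 0 := by
  have him := congrArg Complex.im h
  simp only [Complex.im_sum, Complex.inv_im, Complex.add_im, Complex.ofReal_im, add_zero,
    Complex.zero_im, div_eq_mul_inv, ← mul_sum] at him
  have hpos : 0 < ∑ k ∈ s, (Complex.normSq (z + a k))⁻¹ :=
    sum_pos (fun k hk => inv_pos.mpr (Complex.normSq_pos.mpr (hz k hk))) hs
  exact neg_eq_zero.mp ((mul_eq_zero.mp him).resolve_right hpos.ne')

theorem exists_ofReal_of_eval_derivative_prod_X_add_C_eq_zero {ι : Type*} [DecidableEq ι]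
    {s : Finset ι} (a : ι → ℝ) {z : ℂ} (hs : s.Nonempty) (hz : ∀ k ∈ s, z + a k ≠ 0)
    (hderiv : (derivative (∏ k ∈ s, (X + C (a k : ℂ)))).eval z = 0) :
    ∃ x : ℝ, z = x ∧ (∃ i ∈ s, x + a i < 0) ∧ ∃ j ∈ s, 0 < x + a j := by
  rw [eval_derivative_prod_X_add_C s _ hz, mul_eq_zero] at hderiv
  have hsum := hderiv.resolve_left (prod_ne_zero_iff.mpr hz)
  have hre : z = z.re := Complex.ext rfl
    (by simpa using Complex.im_eq_zero_of_sum_inv_add_ofReal_eq_zero hs hz hsum)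
  have hz' : ∀ k ∈ s, z.re + a k ≠ 0 := fun k hk h => hz k hk (by rw [hre]; exact_mod_cast h)
  have hsum' : ∑ k ∈ s, (z.re + a k)⁻¹ = 0 := by
    rw [hre] at hsum; exact_mod_cast hsum
  refine ⟨z.re, hre, ?_, exists_pos_of_sum_inv_eq_zero hs hz' hsum'⟩
  obtain ⟨i, hi, hneg⟩ := exists_pos_of_sum_inv_eq_zero (w := fun k => -(z.re + a k)) hs
    (fun k hk => neg_ne_zero.mpr (hz' k hk))
    (by simp only [inv_neg, sum_neg_distrib, hsum', neg_zero])
  exact ⟨i, hi, neg_pos.mp hneg⟩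

theorem Complex.lt_norm_add_ofReal {x : ℝ} {z : ℂ} (hre : x ≤ z.re) (hne : z ≠ x) (a : ℝ) :
    x + a < ‖z + a‖ := by
  by_cases him : z.im = 0
  · have hlt : x < z.re := hre.lt_of_ne fun h => hne (Complex.ext (by simp [h]) (by simp [him]))
    calc x + a < (z + a).re := by simpa using hlt
      _ ≤ ‖z + a‖ := Complex.re_le_norm _
  · calc x + a ≤ (z + a).re := by simpa using hre
      _ ≤ |(z + a).re| := le_abs_self _
      _ < ‖z + a‖ := Complex.abs_re_lt_norm.mpr (by simpa using him)

theorem Complex.prod_lt_norm_prod_add_ofReal {ι : Type*} {s : Finset ι} (a : ι → ℝ) {x : ℝ}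
    {z : ℂ} (hs : s.Nonempty) (hpos : ∀ k ∈ s, 0 < x + a k) (hre : x ≤ z.re) (hne : z ≠ x) :
    ∏ k ∈ s, (x + a k) < ‖∏ k ∈ s, (z + a k)‖ := by
  rw [Complex.norm_prod]
  exact prod_lt_prod_of_nonempty hpos (fun k _ => Complex.lt_norm_add_ofReal hre hne (a k)) hs

def bUrnMatrix (K : Type*) [Ring K] (m : ℕ) : Matrix (Fin m) (Fin m) K :=
  Matrix.of fun i j =>
    if (i : ℕ) = (j : ℕ) + 1 then ((m : K) + (i : ℕ))
    else if (i : ℕ) = 0 ∧ (j : ℕ) = m - 1 then (2 * m : K)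
    else if i = j then -((m : K) + (i : ℕ))
    else 0

theorem bUrnMatrix_apply_of_ne {K : Type*} [Ring K] {m : ℕ} {i j : Fin m}
    (hsub : (i : ℕ) ≠ j + 1) (hcorner : ¬((i : ℕ) = 0 ∧ (j : ℕ) = m - 1)) (hdiag : i ≠ j) :
    bUrnMatrix K m i j = 0 := by
  rw [bUrnMatrix, of_apply, if_neg hsub, if_neg hcorner, if_neg hdiag]

theorem det_charmatrix_bUrnMatrix {K : Type*} [CommRing K] (n : ℕ) :
    (charmatrix (bUrnMatrix K (n + 2))).det =
      ∏ i : Fin (n + 2), (X + C ((n + 2 : ℕ) + (i : ℕ) : K))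
      - C (2 * (n + 2 : ℕ) * ∏ i : Fin (n + 1), ((n + 2 : ℕ) + ((i : ℕ) + 1) : K)) := by
  have hdiag : ∀ i, charmatrix (bUrnMatrix K (n + 2)) i i =
      X + C ((n + 2 : ℕ) + (i : ℕ) : K) := by
    intro i
    rw [charmatrix_apply_eq, bUrnMatrix, of_apply, if_neg (by omega), if_neg (by omega),
      if_pos rfl, map_neg, sub_neg_eq_add]
  have hcorner : charmatrix (bUrnMatrix K (n + 2)) 0 (Fin.last _) =
      -C (2 * (n + 2 : ℕ) : K) := by
    rw [charmatrix_apply_ne _ _ _ (Fin.ext_iff.not.mpr (by simp)), bUrnMatrix, of_apply,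
      if_neg (by simp), if_pos (by simp)]
  have hsub : ∀ i : Fin (n + 1), charmatrix (bUrnMatrix K (n + 2)) i.succ i.castSucc =
      -C ((n + 2 : ℕ) + ((i : ℕ) + 1) : K) := by
    intro i
    rw [charmatrix_apply_ne _ _ _ (Fin.ext_iff.not.mpr (by simp)), bUrnMatrix, of_apply,
      if_pos (by simp), Fin.val_succ, Nat.cast_succ (i : ℕ)]
  have hsign : ((-1) ^ (n + 1) * (-1) ^ (n + 1) : K[X]) = 1 := by rw [← mul_pow]; norm_num
  rw [det_lowerBidiagonal_add_corner, hcorner]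
  · simp only [hdiag, hsub, prod_neg, ← map_prod, card_univ, Fintype.card_fin]
    rw [map_mul C (2 * ((n + 2 : ℕ) : K))]
    linear_combination (-C (2 * (n + 2 : ℕ) : K) *
      C (∏ i : Fin (n + 1), ((n + 2 : ℕ) + ((i : ℕ) + 1) : K))) * hsign
  · intro i j hij
    rw [charmatrix_apply_ne _ _ _ (by omega),
      bUrnMatrix_apply_of_ne (by omega) (by omega) (by omega), map_zero, neg_zero]
  · intro i j hij hcorner
    rw [charmatrix_apply_ne _ _ _ hij.ne, bUrnMatrix_apply_of_ne (by omega) ?_ hij.ne, map_zero,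
      neg_zero]
    exact fun h => hcorner ⟨Fin.ext h.1, Fin.ext (by simp; omega)⟩

theorem charpoly_bUrnMatrix {K : Type*} [CommRing K] {m : ℕ} (hm : 2 ≤ m) :
    (bUrnMatrix K m).charpoly =
      ∏ k ∈ Ico m (2 * m), (X + C (k : K)) - C (((2 * m)! / m ! : ℕ) : K) := by
  obtain ⟨n, rfl⟩ := Nat.exists_eq_add_of_le' hm
  rw [charpoly, det_charmatrix_bUrnMatrix, Nat.factorial_two_mul_div_factorial,
    prod_Ico_two_mul_eq_prod_fin, prod_Ico_two_mul_eq_prod_fin]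
  congr 1
  · simp only [Nat.cast_add]
  · rw [Fin.prod_univ_castSucc (n := n + 1), mul_comm]
    push_cast
    congr 2
    · exact prod_congr rfl fun i _ => by rw [Fin.val_castSucc]; ring
    · ring

theorem eval_derivative_prod_Ico_ne_zero {m : ℕ} (hm : 0 < m) {z : ℂ}
    (hz : ∏ k ∈ Ico m (2 * m), (z + k) = ∏ k ∈ Ico m (2 * m), (1 + (k : ℂ))) :
    (derivative (∏ k ∈ Ico m (2 * m), (X + C (k : ℂ)))).eval z ≠ 0 := by
  intro hderiv
  have hs : (Ico m (2 * m)).Nonempty := nonempty_Ico.mpr (by omega)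
  have hne : ∀ k ∈ Ico m (2 * m), z + ((k : ℝ) : ℂ) ≠ 0 := by
    refine prod_ne_zero_iff.mp ?_
    rw [show ∏ k ∈ Ico m (2 * m), (z + ((k : ℝ) : ℂ)) = ∏ k ∈ Ico m (2 * m), (z + k) by simp, hz]
    exact prod_ne_zero_iff.mpr fun k _ => by norm_cast; omega
  obtain ⟨x, rfl, ⟨i, hi, hxi⟩, j, hj, hxj⟩ :=
    exists_ofReal_of_eval_derivative_prod_X_add_C_eq_zero (fun k : ℕ => (k : ℝ)) hs hne
      (by simpa using hderiv)
  have hbound : ∀ k ∈ Ico m (2 * m), |x + k| < 1 + k := by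
    intro k hk
    simp only [mem_Ico] at hi hj hk
    have : (j : ℝ) + 1 ≤ 2 * m := by exact_mod_cast hj.2
    have : (m : ℝ) ≤ k := by exact_mod_cast hk.1
    have : (m : ℝ) ≤ i := by exact_mod_cast hi.1
    rw [abs_lt]
    constructor <;> linarith
  have hzR : ∏ k ∈ Ico m (2 * m), (x + (k : ℝ)) = ∏ k ∈ Ico m (2 * m), (1 + (k : ℝ)) := by
    exact_mod_cast hz
  have hlt : |∏ k ∈ Ico m (2 * m), (x + (k : ℝ))| < ∏ k ∈ Ico m (2 * m), (1 + (k : ℝ)) := by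
    rw [abs_prod]
    refine prod_lt_prod_of_nonempty (fun k hk => abs_pos.mpr fun h => ?_) hbound hs
    exact hne k hk (by exact_mod_cast h)
  rw [hzR, abs_of_pos (prod_pos fun k _ => by positivity)] at hlt
  exact hlt.false

theorem re_lt_one_of_prod_Ico_eq {m : ℕ} (hm : 0 < m) {z : ℂ}
    (hz : ∏ k ∈ Ico m (2 * m), (z + k) = ∏ k ∈ Ico m (2 * m), (1 + (k : ℂ))) (hz1 : z ≠ 1) :
    z.re < 1 := by
  by_contra! hre
  have hlt := Complex.prod_lt_norm_prod_add_ofReal (s := Ico m (2 * m)) (fun k : ℕ => (k : ℝ))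
    (nonempty_Ico.mpr (by omega)) (fun k _ => by positivity) hre (by simpa using hz1)
  simp only [Complex.ofReal_natCast] at hlt
  rw [hz, Complex.norm_prod] at hlt
  exact hlt.not_ge (prod_congr rfl fun k _ => by exact_mod_cast Complex.norm_natCast (1 + k)).le

/-- Characteristic polynomial of the B-urn matrix: the eigenvalues of the `m × m`
matrix `R_m` (diagonal `−m, …, −(2m−1)`, subdiagonal `m+1, …, 2m−1`, top-right
entry `2m`) are exactly the solutions of `(2m)!/m! = ∏_{k=m}^{2m−1} (z + k)`;
all roots are simple, `z = 1` is a root, and every other root has real part `< 1`. -/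
theorem b_urn_eigenvalues (m : ℕ) (hm : 2 ≤ m)
    (R : Matrix (Fin m) (Fin m) ℂ)
    (hR : ∀ i j : Fin m, R i j =
      if (i : ℕ) = (j : ℕ) + 1 then ((m : ℂ) + (i : ℕ))
      else if (i : ℕ) = 0 ∧ (j : ℕ) = m - 1 then (2 * m : ℂ)
      else if i = j then -((m : ℂ) + (i : ℕ))
      else 0) :
    (∀ z : ℂ, z ∈ spectrum ℂ R ↔
      ∏ k ∈ Finset.Ico m (2 * m), (z + (k : ℂ)) =
        ((Nat.factorial (2 * m) / Nat.factorial m : ℕ) : ℂ)) ∧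
    (∀ z : ℂ, z ∈ spectrum ℂ R → (Matrix.charpoly R).rootMultiplicity z = 1) ∧
    (1 : ℂ) ∈ spectrum ℂ R ∧
    (∀ z : ℂ, z ∈ spectrum ℂ R → z ≠ 1 → z.re < 1) := by
  obtain rfl : R = bUrnMatrix ℂ m := Matrix.ext hR
  have hN : (((2 * m)! / m ! : ℕ) : ℂ) = ∏ k ∈ Ico m (2 * m), (1 + (k : ℂ)) := by
    rw [Nat.factorial_two_mul_div_factorial]; norm_cast
  have hspec : ∀ z : ℂ, z ∈ spectrum ℂ (bUrnMatrix ℂ m) ↔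
      ∏ k ∈ Ico m (2 * m), (z + (k : ℂ)) = (((2 * m)! / m ! : ℕ) : ℂ) := fun z => by
    rw [mem_spectrum_iff_isRoot_charpoly, charpoly_bUrnMatrix hm, IsRoot, eval_sub, eval_C,
      eval_prod, sub_eq_zero]
    simp only [eval_add, eval_X, eval_C]
  have hroots : ∀ z ∈ spectrum ℂ (bUrnMatrix ℂ m),
      ∏ k ∈ Ico m (2 * m), (z + (k : ℂ)) = ∏ k ∈ Ico m (2 * m), (1 + (k : ℂ)) :=
    fun z hz => ((hspec z).mp hz).trans hN
  refine ⟨hspec, fun z hz => ?_, (hspec 1).mpr hN.symm,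
    fun z hz hz1 => re_lt_one_of_prod_Ico_eq (by omega) (hroots z hz) hz1⟩
  have hroot := mem_spectrum_iff_isRoot_charpoly.mp hz
  have hne := (bUrnMatrix ℂ m).charpoly_monic.ne_zero
  rw [charpoly_bUrnMatrix hm] at hroot hne ⊢
  refine rootMultiplicity_eq_one hne hroot ?_
  rw [derivative_sub, derivative_C, sub_zero, IsRoot]
  exact eval_derivative_prod_Ico_ne_zero (by omega) (hroots z hz)
end
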